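/- Let M be a Puiseux monoid with an approximation (M_i)_{i≥1}, and let m ∈ ℕ. Then the sequence (ρ_m(M_i))_{i≥1} is nondecreasing and lim_{i→∞} ρ_m(M_i) = ρ_m(M) in ℝ ∪ {∞}. -/
import Mathlib


open scoped NNRat ENNReal

/-- The set of atoms of a Puiseux monoid (additive submonoid of `ℚ≥0`). -/
def PMatoms (M : AddSubmonoid ℚ≥0) : Set ℚ≥0 :=
  {a | a ∈ M ∧ a ≠ 0 ∧ ∀ y ∈ M, ∀ z ∈ M, y ≠ 0 → z ≠ 0 → a ≠ y + z}

/-- A Puiseux monoid is atomic if it is generated by its atoms. -/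
def PMatomic (M : AddSubmonoid ℚ≥0) : Prop :=
  ∀ x ∈ M, x ∈ AddSubmonoid.closure (PMatoms M)

/-- The set of factorizations of `x` in `M`: multisets of atoms summing to `x`. -/
def PMfactorizations (M : AddSubmonoid ℚ≥0) (x : ℚ≥0) : Set (Multiset ℚ≥0) :=
  {s | (∀ a ∈ s, a ∈ PMatoms M) ∧ s.sum = x}

/-- The set of lengths of `x` in `M`. -/
def PMlengths (M : AddSubmonoid ℚ≥0) (x : ℚ≥0) : Set ℕ :=
  Multiset.card '' PMfactorizations M x

/-- The elasticity of an element: `sup L(x) / inf L(x)` in `ℝ≥0∞`, `1` for `x = 0`. -/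
noncomputable def PMelasticityOf (M : AddSubmonoid ℚ≥0) (x : ℚ≥0) : ℝ≥0∞ :=
  if x = 0 then 1
  else sSup ((fun n : ℕ => (n : ℝ≥0∞)) '' PMlengths M x) /
       sInf ((fun n : ℕ => (n : ℝ≥0∞)) '' PMlengths M x)

/-- The elasticity of a Puiseux monoid. -/
noncomputable def PMelasticity (M : AddSubmonoid ℚ≥0) : ℝ≥0∞ :=
  ⨆ x ∈ M, PMelasticityOf M x

/-- The union of sets of lengths containing `n`. -/
def PMunionOfLengths (M : AddSubmonoid ℚ≥0) (n : ℕ) : Set ℕ :=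
  {m | ∃ x : ℚ≥0, n ∈ PMlengths M x ∧ m ∈ PMlengths M x}

/-- The `n`-th local elasticity `ρ_n(M) = sup U_n(M)` in `ℝ≥0∞`. -/
noncomputable def PMlocalElasticity (M : AddSubmonoid ℚ≥0) (n : ℕ) : ℝ≥0∞ :=
  sSup ((fun m : ℕ => (m : ℝ≥0∞)) '' PMunionOfLengths M n)

/-- The set of distances of an element `x` of `M`. -/
def PMdistances (M : AddSubmonoid ℚ≥0) (x : ℚ≥0) : Set ℕ :=
  {d | 0 < d ∧ ∃ l ∈ PMlengths M x,
    PMlengths M x ∩ Set.Icc l (l + d) = {l, l + d}}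

/-- The set of distances (delta set) of `M`. -/
def PMDelta (M : AddSubmonoid ℚ≥0) : Set ℕ :=
  ⋃ x ∈ {y : ℚ≥0 | y ∈ M ∧ y ≠ 0}, PMdistances M x

/-- `(Mi)` is an approximation of `M`: an increasing sequence of atomic submonoids
with union `M` and increasing sets of atoms. -/
def PMapprox (M : AddSubmonoid ℚ≥0) (Mi : ℕ → AddSubmonoid ℚ≥0) : Prop :=
  (∀ i, Mi i ≤ Mi (i + 1)) ∧ (∀ i, PMatomic (Mi i)) ∧
  (∀ i, PMatoms (Mi i) ⊆ PMatoms (Mi (i + 1))) ∧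
  (∀ x, x ∈ M ↔ ∃ i, x ∈ Mi i)


lemma Mi_mono {M : AddSubmonoid ℚ≥0} {Mi : ℕ → AddSubmonoid ℚ≥0} (h : PMapprox M Mi) :
    Monotone Mi := monotone_nat_of_le_succ h.1

lemma atoms_mono {M : AddSubmonoid ℚ≥0} {Mi : ℕ → AddSubmonoid ℚ≥0} (h : PMapprox M Mi) :
    Monotone fun i => PMatoms (Mi i) := monotone_nat_of_le_succ h.2.2.1

lemma atoms_subset_M {M : AddSubmonoid ℚ≥0} {Mi : ℕ → AddSubmonoid ℚ≥0} (h : PMapprox M Mi)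
    (i : ℕ) : PMatoms (Mi i) ⊆ PMatoms M := by
  rintro a ⟨haM, ha0, hsum⟩
  refine ⟨(h.2.2.2 a).2 ⟨i, haM⟩, ha0, ?_⟩
  rintro y hy z hz hy0 hz0
  obtain ⟨j, hj⟩ := (h.2.2.2 y).1 hy
  obtain ⟨k, hk⟩ := (h.2.2.2 z).1 hz
  set N := max i (max j k)
  have haN : a ∈ PMatoms (Mi N) := atoms_mono h (le_max_left _ _) ⟨haM, ha0, hsum⟩
  exact haN.2.2 y (Mi_mono h (le_trans (le_max_left j k) (le_max_right i _)) hj)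
    z (Mi_mono h (le_trans (le_max_right j k) (le_max_right i _)) hk) hy0 hz0

lemma atoms_M_subset {M : AddSubmonoid ℚ≥0} {Mi : ℕ → AddSubmonoid ℚ≥0} (h : PMapprox M Mi) :
    PMatoms M ⊆ ⋃ i, PMatoms (Mi i) := by
  rintro a ⟨haM, ha0, hsum⟩
  obtain ⟨i, hi⟩ := (h.2.2.2 a).1 haM
  obtain ⟨s, hs, hssum⟩ := AddSubmonoid.exists_multiset_of_mem_closure (h.2.1 i a hi)
  have hsne : s ≠ 0 := by
    rintro rfl; exact ha0 hssum.symm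
  obtain ⟨b, hbmem⟩ := Multiset.exists_mem_of_ne_zero hsne
  obtain ⟨t, rfl⟩ := Multiset.exists_cons_of_mem hbmem
  have hb : b ∈ PMatoms (Mi i) := hs b (Multiset.mem_cons_self _ _)
  rcases eq_or_ne t 0 with rfl | htne
  · simp only [Multiset.sum_cons, Multiset.sum_zero, add_zero] at hssum
    exact Set.mem_iUnion.2 ⟨i, hssum ▸ hb⟩
  · exfalso
    have hts : t.sum ≠ 0 := by
      intro h0
      obtain ⟨c, hc⟩ := Multiset.exists_mem_of_ne_zero htne
      exact (hs c (Multiset.mem_cons_of_mem hc)).2.1 (Multiset.sum_eq_zero_iff.1 h0 c hc)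
    have htM : t.sum ∈ M := (h.2.2.2 _).2 ⟨i, AddSubmonoid.multiset_sum_mem _ t
      (fun c hc => (hs c (Multiset.mem_cons_of_mem hc)).1)⟩
    have hbM : b ∈ M := (h.2.2.2 _).2 ⟨i, hb.1⟩
    rw [Multiset.sum_cons] at hssum
    exact hsum b hbM t.sum htM hb.2.1 hts hssum.symm

lemma lengths_mono {M1 M2 : AddSubmonoid ℚ≥0} (h : PMatoms M1 ⊆ PMatoms M2) (x : ℚ≥0) :
    PMlengths M1 x ⊆ PMlengths M2 x := by
  rintro n ⟨s, ⟨hs1, hs2⟩, rfl⟩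
  exact ⟨s, ⟨fun a ha => h (hs1 a ha), hs2⟩, rfl⟩

lemma exists_index {M : AddSubmonoid ℚ≥0} {Mi : ℕ → AddSubmonoid ℚ≥0} (h : PMapprox M Mi)
    (s : Multiset ℚ≥0) (hs : ∀ a ∈ s, a ∈ PMatoms M) :
    ∃ i, ∀ a ∈ s, a ∈ PMatoms (Mi i) := by
  induction s using Multiset.induction with
  | empty => exact ⟨0, by simp⟩
  | cons b t ih =>
    obtain ⟨i, hi⟩ := ih (fun a ha => hs a (Multiset.mem_cons_of_mem ha))
    obtain ⟨j, hj⟩ := Set.mem_iUnion.1 (atoms_M_subset h (hs b (Multiset.mem_cons_self _ _)))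
    refine ⟨max i j, fun a ha => ?_⟩
    rcases Multiset.mem_cons.1 ha with rfl | ha
    · exact atoms_mono h (le_max_right i j) hj
    · exact atoms_mono h (le_max_left i j) (hi a ha)

lemma union_eq {M : AddSubmonoid ℚ≥0} {Mi : ℕ → AddSubmonoid ℚ≥0} (h : PMapprox M Mi)
    (n : ℕ) : PMunionOfLengths M n = ⋃ i, PMunionOfLengths (Mi i) n := by
  ext m
  constructor
  · rintro ⟨x, ⟨s, ⟨hs1, hs2⟩, hsc⟩, ⟨t, ⟨ht1, ht2⟩, htc⟩⟩
    obtain ⟨i, hi⟩ := exists_index h s hs1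
    obtain ⟨j, hj⟩ := exists_index h t ht1
    refine Set.mem_iUnion.2 ⟨max i j, x,
      ⟨s, ⟨fun a ha => atoms_mono h (le_max_left i j) (hi a ha), hs2⟩, hsc⟩,
      ⟨t, ⟨fun a ha => atoms_mono h (le_max_right i j) (hj a ha), ht2⟩, htc⟩⟩
  · rintro hm
    obtain ⟨i, x, h1, h2⟩ := Set.mem_iUnion.1 hm
    exact ⟨x, lengths_mono (atoms_subset_M h i) x h1, lengths_mono (atoms_subset_M h i) x h2⟩

lemma localElas_mono {M : AddSubmonoid ℚ≥0} {Mi : ℕ → AddSubmonoid ℚ≥0} (h : PMapprox M Mi)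
    (m : ℕ) : Monotone (fun i : ℕ => PMlocalElasticity (Mi i) m) := by
  intro i j hij
  apply sSup_le_sSup
  apply Set.image_mono
  rintro k ⟨x, h1, h2⟩
  exact ⟨x, lengths_mono (atoms_mono h hij) x h1, lengths_mono (atoms_mono h hij) x h2⟩

theorem stmt5 (M : AddSubmonoid ℚ≥0) (Mi : ℕ → AddSubmonoid ℚ≥0)
    (h : PMapprox M Mi) (m : ℕ) :
    Monotone (fun i : ℕ => PMlocalElasticity (Mi i) m) ∧
    Filter.Tendsto (fun i : ℕ => PMlocalElasticity (Mi i) m) Filter.atTop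
      (nhds (PMlocalElasticity M m)) := by
  refine ⟨localElas_mono h m, ?_⟩
  have key : PMlocalElasticity M m = ⨆ i, PMlocalElasticity (Mi i) m := by
    unfold PMlocalElasticity
    rw [union_eq h m, Set.image_iUnion, sSup_iUnion]
  rw [key]
  exact tendsto_atTop_iSup (localElas_mono h m)
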